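/- (Trokhimchuk's one-dimensional theorem, as used in Lemma 1) Let g : (α, β) → ℂ be continuous, and suppose that at every point t ∈ (α, β), except at most countably many, at least one of the one-sided derivatives lim_{δ→0⁺}(g(t±δ) − g(t))/δ exists and equals 0. Then g is constant on (α, β). -/

import Mathlib

noncomputable section

/-- The commutative algebra `A₃ = ℂ[ρ]/(ρ³)`, with basis `{1, ρ, ρ²}`;
an element `⟨a, b, c⟩` represents `a + b·ρ + c·ρ²`. -/
@[ext] structure A3 : Type where
  a : ℂ
  b : ℂ
  c : ℂ

namespace A3

instance : Zero A3 := ⟨⟨0, 0, 0⟩⟩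
instance : One A3 := ⟨⟨1, 0, 0⟩⟩
instance : Add A3 := ⟨fun x y => ⟨x.a + y.a, x.b + y.b, x.c + y.c⟩⟩
instance : Neg A3 := ⟨fun x => ⟨-x.a, -x.b, -x.c⟩⟩
instance : Mul A3 :=
  ⟨fun x y => ⟨x.a * y.a, x.a * y.b + x.b * y.a, x.a * y.c + x.b * y.b + x.c * y.a⟩⟩

@[simp] lemma zero_a : (0 : A3).a = 0 := rfl
@[simp] lemma zero_b : (0 : A3).b = 0 := rfl
@[simp] lemma zero_c : (0 : A3).c = 0 := rfl
@[simp] lemma one_a : (1 : A3).a = 1 := rfl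
@[simp] lemma one_b : (1 : A3).b = 0 := rfl
@[simp] lemma one_c : (1 : A3).c = 0 := rfl
@[simp] lemma add_a (x y : A3) : (x + y).a = x.a + y.a := rfl
@[simp] lemma add_b (x y : A3) : (x + y).b = x.b + y.b := rfl
@[simp] lemma add_c (x y : A3) : (x + y).c = x.c + y.c := rfl
@[simp] lemma neg_a (x : A3) : (-x).a = -x.a := rfl
@[simp] lemma neg_b (x : A3) : (-x).b = -x.b := rfl
@[simp] lemma neg_c (x : A3) : (-x).c = -x.c := rfl
@[simp] lemma mul_a (x y : A3) : (x * y).a = x.a * y.a := rfl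
@[simp] lemma mul_b (x y : A3) : (x * y).b = x.a * y.b + x.b * y.a := rfl
@[simp] lemma mul_c (x y : A3) : (x * y).c = x.a * y.c + x.b * y.b + x.c * y.a := rfl

instance : CommRing A3 where
  add_assoc x y z := by ext <;> simp <;> ring
  zero_add x := by ext <;> simp
  add_zero x := by ext <;> simp
  add_comm x y := by ext <;> simp <;> ring
  neg_add_cancel x := by ext <;> simp
  left_distrib x y z := by ext <;> simp <;> ring
  right_distrib x y z := by ext <;> simp <;> ring
  zero_mul x := by ext <;> simp
  mul_zero x := by ext <;> simp
  mul_assoc x y z := by ext <;> simp <;> ring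
  one_mul x := by ext <;> simp
  mul_one x := by ext <;> simp
  mul_comm x y := by ext <;> simp <;> ring
  nsmul := fun n x => ⟨n • x.a, n • x.b, n • x.c⟩
  nsmul_zero x := by ext <;> exact zero_nsmul _
  nsmul_succ n x := by ext <;> exact succ_nsmul _ _
  zsmul := fun n x => ⟨n • x.a, n • x.b, n • x.c⟩
  zsmul_zero' x := by ext <;> exact zero_zsmul _
  zsmul_succ' n x := by ext <;> exact SubNegMonoid.zsmul_succ' n _
  zsmul_neg' n x := by ext <;> exact SubNegMonoid.zsmul_neg' n _

/-- The canonical embedding `ℂ → A₃`. -/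
def toA3 : ℂ →+* A3 where
  toFun r := ⟨r, 0, 0⟩
  map_one' := rfl
  map_mul' x y := by ext <;> simp
  map_zero' := rfl
  map_add' x y := by ext <;> simp

instance : Algebra ℂ A3 := toA3.toAlgebra
instance : Algebra ℝ A3 := (toA3.comp (algebraMap ℝ ℂ)).toAlgebra

@[simp] lemma smulC_a (r : ℂ) (x : A3) : (r • x).a = r * x.a := by
  show (toA3 r * x).a = _ ; simp [toA3]
@[simp] lemma smulC_b (r : ℂ) (x : A3) : (r • x).b = r * x.b := by
  show (toA3 r * x).b = _ ; simp [toA3]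
@[simp] lemma smulC_c (r : ℂ) (x : A3) : (r • x).c = r * x.c := by
  show (toA3 r * x).c = _ ; simp [toA3]
@[simp] lemma smulR_a (r : ℝ) (x : A3) : (r • x).a = (r : ℂ) * x.a := by
  show ((toA3.comp (algebraMap ℝ ℂ)) r * x).a = _ ; simp [toA3]
@[simp] lemma smulR_b (r : ℝ) (x : A3) : (r • x).b = (r : ℂ) * x.b := by
  show ((toA3.comp (algebraMap ℝ ℂ)) r * x).b = _ ; simp [toA3]
@[simp] lemma smulR_c (r : ℝ) (x : A3) : (r • x).c = (r : ℂ) * x.c := by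
  show ((toA3.comp (algebraMap ℝ ℂ)) r * x).c = _ ; simp [toA3]

/-- The nilpotent generator `ρ`. -/
def ρ : A3 := ⟨0, 1, 0⟩

lemma rho_sq : ρ ^ 2 = ⟨0, 0, 1⟩ := by ext <;> simp [ρ, sq]
lemma rho_cubed : ρ ^ 3 = 0 := by ext <;> simp [ρ, pow_succ, sq]

/-- The element `a + b·ρ + c·ρ²` of `A₃`. -/
def el (a b c : ℂ) : A3 := algebraMap ℂ A3 a + b • ρ + c • ρ ^ 2

lemma el_def (a b c : ℂ) : el a b c = ⟨a, b, c⟩ := by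
  simp only [el, rho_sq]; ext <;> simp [ρ] <;> simp [Algebra.algebraMap_eq_smul_one, toA3]

/-- The Euclidean norm `‖a + bρ + cρ²‖ = √(|a|² + |b|² + |c|²)`. -/
def nrm (x : A3) : ℝ :=
  Real.sqrt (‖x.a‖ ^ 2 + ‖x.b‖ ^ 2 + ‖x.c‖ ^ 2)

/-- The topology of `A₃` (that of the Euclidean norm, i.e. of `ℂ³`). -/
instance : TopologicalSpace A3 :=
  TopologicalSpace.induced (fun x => (x.a, x.b, x.c)) inferInstance

/-- The functional `f(a + bρ + cρ²) = a`. -/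
def fl (x : A3) : ℂ := x.a

/-- The set `I = {λ₁ρ + λ₂ρ² : λ₁, λ₂ ∈ ℂ}`. -/
def Iset : Set A3 := {x | ∃ l₁ l₂ : ℂ, x = l₁ • ρ + l₂ • ρ ^ 2}

/-- The kernel of `f`, i.e. the ideal `I`, as a real subspace of `A₃`. -/
def Iker : Submodule ℝ A3 where
  carrier := {x | x.a = 0}
  add_mem' := by intro x y hx hy; simp_all [Set.mem_setOf_eq]
  zero_mem' := rfl
  smul_mem' := by intro r x hx; simp_all [Set.mem_setOf_eq]

/-- Componentwise contour integral over the circle `C(center, r)` of an `A₃`-valued function. -/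
def cInt (g : ℂ → A3) (center : ℂ) (r : ℝ) : A3 :=
  ⟨∮ z in C(center, r), (g z).a, ∮ z in C(center, r), (g z).b, ∮ z in C(center, r), (g z).c⟩

end A3

open Set Filter Topology MeasureTheory Asymptotics

/-! If the right derivative of a real function `u` vanishes at every point of a set `E`, then
for each `ε > 0` the set `E` is an increasing union of sets `P_h` (`h → 0`) on which `u` moves
by at most `ε h` over steps of length at most `h`; covering such a set by a grid of mesh `h`
bounds the measure of its image by `ε (t - s + h)`, so `u '' E` is null (left derivatives reduce
to this by `x ↦ -x`). For continuous `u` whose one-sided derivative vanishes off a countable set,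
`u '' [a, b]` is therefore null, while it contains `[u a, u b]` by the intermediate value
theorem. A vector-valued `g` is handled through `u = ‖g · - g a‖`. -/

section Slope

variable {F : Type*} [NormedAddCommGroup F] [NormedSpace ℝ F] {f : ℝ → F} {f' : F} {x : ℝ}

theorem hasDerivWithinAt_Ioi_iff_tendsto_slope_zero_right :
    HasDerivWithinAt f f' (Ioi x) x ↔
      Tendsto (fun t ↦ t⁻¹ • (f (x + t) - f x)) (𝓝[>] 0) (𝓝 f') := by
  rw [hasDerivWithinAt_iff_tendsto_slope' self_notMem_Ioi, ← add_zero x, ← map_add_left_nhdsGT,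
    tendsto_map'_iff, add_zero]
  simp [Function.comp_def, slope_def_module]

theorem hasDerivWithinAt_Iio_iff_tendsto_slope_zero_right_neg :
    HasDerivWithinAt f f' (Iio x) x ↔
      Tendsto (fun t ↦ t⁻¹ • (f (x - t) - f x)) (𝓝[>] 0) (𝓝 (-f')) := by
  rw [hasDerivWithinAt_iff_tendsto_slope' self_notMem_Iio, ← sub_zero x, ← map_subLeft_nhdsGT,
    tendsto_map'_iff, sub_zero, ← tendsto_neg_iff]
  simp [slope_def_module]

end Slope

theorem HasDerivWithinAt.zero_of_norm_sub_le {E F : Type*} [NormedAddCommGroup E] [NormedSpace ℝ E]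
    [NormedAddCommGroup F] [NormedSpace ℝ F] {f : ℝ → E} {g : ℝ → F} {s : Set ℝ} {x : ℝ}
    (hg : HasDerivWithinAt g 0 s x) (hfg : ∀ y, ‖f y - f x‖ ≤ ‖g y - g x‖) :
    HasDerivWithinAt f 0 s x := by
  rw [hasDerivWithinAt_iff_isLittleO] at hg ⊢
  simpa using (isBigO_of_le _ hfg).trans_isLittleO (by simpa using hg)

theorem volume_image_le_of_abs_sub_le_mul {u : ℝ → ℝ} {R : Set ℝ} {s t h ε : ℝ}
    (hR : R ⊆ Icc s t) (hh : 0 < h) (hε : 0 ≤ ε)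
    (hu : ∀ x ∈ R, ∀ y ∈ R, x ≤ y → y ≤ x + h → |u y - u x| ≤ ε * h) :
    volume (u '' R) ≤ ENNReal.ofReal (ε * (t - s + h)) := by
  rcases R.eq_empty_or_nonempty with rfl | ⟨x₀, hx₀⟩
  · simp
  have hst : s ≤ t := (hR hx₀).1.trans (hR hx₀).2
  set K := ⌊(t - s) / h⌋₊ + 1
  set piece : ℕ → Set ℝ := fun k ↦ R ∩ Icc (s + k * h) (s + k * h + h)
  have hcover : R ⊆ ⋃ k ∈ Finset.range K, piece k := by
    intro x hx
    obtain ⟨hsx, hxt⟩ := hR hx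
    have hk : (⌊(x - s) / h⌋₊ : ℝ) ≤ (x - s) / h := Nat.floor_le (by positivity)
    have hk' : (x - s) / h < ⌊(x - s) / h⌋₊ + 1 := Nat.lt_floor_add_one _
    rw [le_div_iff₀ hh] at hk
    rw [div_lt_iff₀ hh] at hk'
    refine mem_iUnion₂.mpr ⟨⌊(x - s) / h⌋₊, Finset.mem_range.mpr (Nat.lt_succ_of_le ?_), hx, ?_, ?_⟩
    · exact Nat.floor_le_floor (by gcongr)
    · linarith
    · linarith
  have hpiece : ∀ k, volume (u '' piece k) ≤ ENNReal.ofReal (ε * h) := by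
    intro k
    refine (Real.volume_le_diam _).trans (Metric.ediam_le ?_)
    rintro _ ⟨x, ⟨hx, hx₁, hx₂⟩, rfl⟩ _ ⟨y, ⟨hy, hy₁, hy₂⟩, rfl⟩
    rw [edist_le_ofReal (by positivity), Real.dist_eq]
    rcases le_total x y with hxy | hyx
    · rw [abs_sub_comm]; exact hu x hx y hy hxy (by linarith)
    · exact hu y hy x hx hyx (by linarith)
  have hKh : (K : ℝ) * h ≤ t - s + h := by
    have := Nat.floor_le (div_nonneg (sub_nonneg.mpr hst) hh.le)
    rw [le_div_iff₀ hh] at this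
    push_cast [K]
    linarith
  calc volume (u '' R) ≤ ∑ k ∈ Finset.range K, volume (u '' piece k) := by
        refine (measure_mono ?_).trans (measure_biUnion_finset_le _ _)
        rw [← image_iUnion₂]
        exact image_mono hcover
    _ ≤ ∑ _k ∈ Finset.range K, ENNReal.ofReal (ε * h) := Finset.sum_le_sum fun k _ ↦ hpiece k
    _ = ENNReal.ofReal (K * (ε * h)) := by
        rw [Finset.sum_const, Finset.card_range, nsmul_eq_mul,
          ENNReal.ofReal_mul (Nat.cast_nonneg K), ENNReal.ofReal_natCast]
    _ ≤ ENNReal.ofReal (ε * (t - s + h)) := by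
        rw [mul_left_comm]
        gcongr

theorem HasDerivWithinAt.exists_abs_sub_le_of_Ioi_zero {u : ℝ → ℝ} {x ε : ℝ}
    (hu : HasDerivWithinAt u 0 (Ioi x) x) (hε : 0 < ε) :
    ∃ n : ℕ, ∀ y ∈ Icc x (x + 1 / (n + 1)), |u y - u x| ≤ ε * (y - x) := by
  rw [hasDerivWithinAt_iff_isLittleO] at hu
  have hsmall : ∀ᶠ y in 𝓝[>] x, |u y - u x| ≤ ε * |y - x| := by simpa using hu.def hε
  obtain ⟨r, hr, hsub⟩ := mem_nhdsGT_iff_exists_Ioo_subset.mp hsmall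
  obtain ⟨n, hn⟩ := exists_nat_one_div_lt (sub_pos.mpr (mem_Ioi.mp hr))
  refine ⟨n, fun y ⟨hxy, hy⟩ ↦ ?_⟩
  rcases hxy.eq_or_lt with rfl | hxy
  · simp
  · simpa [abs_of_pos (sub_pos.mpr hxy)] using hsub ⟨hxy, by linarith⟩

theorem volume_image_le_of_hasDerivWithinAt_Ioi_zero {u : ℝ → ℝ} {E : Set ℝ} {s t ε : ℝ}
    (hE : E ⊆ Icc s t) (hu : ∀ x ∈ E, HasDerivWithinAt u 0 (Ioi x) x) (hε : 0 < ε) :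
    volume (u '' E) ≤ ENNReal.ofReal (ε * (t - s + 1)) := by
  set P : ℕ → Set ℝ := fun n ↦ {x ∈ E | ∀ y ∈ Icc x (x + 1 / (n + 1)), |u y - u x| ≤ ε * (y - x)}
  have hmono : Monotone P := fun n m hnm x ⟨hx, hxP⟩ ↦
    ⟨hx, fun y hy ↦ hxP y ⟨hy.1, hy.2.trans (by gcongr)⟩⟩
  have hcover : E ⊆ ⋃ n, P n := fun x hx ↦
    mem_iUnion.mpr <| (((hu x hx).exists_abs_sub_le_of_Ioi_zero hε).imp fun _ hn ↦ ⟨hx, hn⟩)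
  have hP : ∀ n, volume (u '' P n) ≤ ENNReal.ofReal (ε * (t - s + 1)) := by
    intro n
    have hh : (0 : ℝ) < 1 / (n + 1) := by positivity
    refine (volume_image_le_of_abs_sub_le_mul (fun x hx ↦ hE hx.1) hh hε.le ?_).trans ?_
    · rintro x ⟨-, hxP⟩ y - hxy hy
      exact (hxP y ⟨hxy, hy⟩).trans (by gcongr; linarith)
    · gcongr
      exact div_le_one_of_le₀ (by linarith [n.cast_nonneg (α := ℝ)]) (by positivity)
  calc volume (u '' E) ≤ volume (⋃ n, u '' P n) := by
        rw [← image_iUnion]; exact measure_mono (image_mono hcover)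
    _ = ⨆ n, volume (u '' P n) := (monotone_image.comp hmono).measure_iUnion
    _ ≤ _ := iSup_le hP

theorem volume_image_eq_zero_of_hasDerivWithinAt_Ioi_zero {u : ℝ → ℝ} {E : Set ℝ}
    (hu : ∀ x ∈ E, HasDerivWithinAt u 0 (Ioi x) x) : volume (u '' E) = 0 := by
  have hbdd : ∀ n : ℕ, volume (u '' (E ∩ Icc (-n) n)) = 0 := by
    intro n
    have hlim : Tendsto (fun ε : ℝ ↦ ENNReal.ofReal (ε * (n - -n + 1))) (𝓝[>] 0) (𝓝 0) := by
      simpa using ENNReal.tendsto_ofReal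
        (((continuous_mul_const _).tendsto' 0 0 (zero_mul _)).mono_left nhdsWithin_le_nhds)
    refine le_antisymm (ge_of_tendsto hlim (eventually_nhdsWithin_of_forall fun ε hε ↦ ?_)) bot_le
    exact volume_image_le_of_hasDerivWithinAt_Ioi_zero inter_subset_right
      (fun x hx ↦ hu x hx.1) hε
  refine measure_mono_null ?_ (measure_iUnion_null hbdd)
  rintro _ ⟨x, hx, rfl⟩
  obtain ⟨n, hn⟩ := exists_nat_ge |x|
  exact mem_iUnion.mpr ⟨n, x, ⟨hx, abs_le.mp hn⟩, rfl⟩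

theorem volume_image_eq_zero_of_hasDerivWithinAt_Iio_zero {u : ℝ → ℝ} {E : Set ℝ}
    (hu : ∀ x ∈ E, HasDerivWithinAt u 0 (Iio x) x) : volume (u '' E) = 0 := by
  have hneg : ∀ y ∈ -E, HasDerivWithinAt (u ∘ Neg.neg) 0 (Ioi y) y := fun y hy ↦ by
    have := (hu (-y) hy).scomp y (hasDerivAt_neg y).hasDerivWithinAt
      fun z (hz : y < z) ↦ neg_lt_neg hz
    rwa [smul_zero] at this
  have h := volume_image_eq_zero_of_hasDerivWithinAt_Ioi_zero hneg
  rw [← image_neg_eq_neg, image_image] at h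
  simpa [Function.comp_def] using h

theorem volume_image_eq_zero_of_hasDerivWithinAt_Ioi_or_Iio_zero {u : ℝ → ℝ} {E : Set ℝ}
    (hu : ∀ x ∈ E, HasDerivWithinAt u 0 (Ioi x) x ∨ HasDerivWithinAt u 0 (Iio x) x) :
    volume (u '' E) = 0 := by
  have hright := volume_image_eq_zero_of_hasDerivWithinAt_Ioi_zero (u := u)
    (E := {x ∈ E | HasDerivWithinAt u 0 (Ioi x) x}) fun _ hx ↦ hx.2
  have hleft := volume_image_eq_zero_of_hasDerivWithinAt_Iio_zero (u := u)
    (E := {x ∈ E | HasDerivWithinAt u 0 (Iio x) x}) fun _ hx ↦ hx.2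
  refine measure_mono_null ?_ (measure_union_null hright hleft)
  rintro _ ⟨x, hx, rfl⟩
  exact (hu x hx).elim (fun h ↦ .inl ⟨x, ⟨hx, h⟩, rfl⟩) fun h ↦ .inr ⟨x, ⟨hx, h⟩, rfl⟩

theorem eq_of_hasDerivWithinAt_Ioi_or_Iio_zero_of_countable_real {u : ℝ → ℝ} {a b : ℝ}
    {S : Set ℝ} (hu : ContinuousOn u (uIcc a b)) (hS : S.Countable)
    (h : ∀ x ∈ uIcc a b \ S, HasDerivWithinAt u 0 (Ioi x) x ∨ HasDerivWithinAt u 0 (Iio x) x) :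
    u a = u b := by
  have himage : volume (u '' uIcc a b) = 0 := by
    refine measure_mono_null ?_ (measure_union_null
      (volume_image_eq_zero_of_hasDerivWithinAt_Ioi_or_Iio_zero h)
      ((hS.image u).measure_zero volume))
    rw [← image_union, sdiff_union_self]
    exact image_mono subset_union_left
  have hvol : volume (uIcc (u a) (u b)) = 0 := measure_mono_null (intermediate_value_uIcc hu) himage
  rw [Real.volume_interval, ENNReal.ofReal_eq_zero, abs_nonpos_iff, sub_eq_zero] at hvol
  exact hvol.symm

theorem eq_of_hasDerivWithinAt_Ioi_or_Iio_zero_of_countable {F : Type*} [NormedAddCommGroup F]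
    [NormedSpace ℝ F] {g : ℝ → F} {a b : ℝ} {S : Set ℝ} (hg : ContinuousOn g (uIcc a b))
    (hS : S.Countable)
    (h : ∀ x ∈ uIcc a b \ S, HasDerivWithinAt g 0 (Ioi x) x ∨ HasDerivWithinAt g 0 (Iio x) x) :
    g a = g b := by
  have hdom : ∀ x y, ‖‖g y - g a‖ - ‖g x - g a‖‖ ≤ ‖g y - g x‖ := fun x y ↦ by
    simpa using abs_norm_sub_norm_le (g y - g a) (g x - g a)
  have key := eq_of_hasDerivWithinAt_Ioi_or_Iio_zero_of_countable_real
    (u := fun y ↦ ‖g y - g a‖) (by fun_prop) hS fun x hx ↦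
      (h x hx).imp (·.zero_of_norm_sub_le (hdom x)) (·.zero_of_norm_sub_le (hdom x))
  simpa [eq_comm, sub_eq_zero] using key

/-- Trokhimchuk's one-dimensional theorem: a continuous `g : (α,β) → ℂ`
having, off a countable set, a vanishing one-sided derivative at each point, is constant. -/
theorem stmt18 (α β : ℝ) (g : ℝ → ℂ) (hg : ContinuousOn g (Set.Ioo α β))
    (S : Set ℝ) (hS : S.Countable)
    (h : ∀ t ∈ Set.Ioo α β \ S,
      Filter.Tendsto (fun δ : ℝ => δ⁻¹ • (g (t + δ) - g t))
        (nhdsWithin 0 (Set.Ioi 0)) (nhds 0) ∨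
      Filter.Tendsto (fun δ : ℝ => δ⁻¹ • (g (t - δ) - g t))
        (nhdsWithin 0 (Set.Ioi 0)) (nhds 0)) :
    ∀ s ∈ Set.Ioo α β, ∀ t ∈ Set.Ioo α β, g s = g t := by
  intro s hs t ht
  have hsub : uIcc s t ⊆ Ioo α β := ordConnected_Ioo.uIcc_subset hs ht
  refine eq_of_hasDerivWithinAt_Ioi_or_Iio_zero_of_countable (hg.mono hsub) hS fun x hx ↦ ?_
  refine (h x ⟨hsub hx.1, hx.2⟩).imp (fun hright ↦ ?_) fun hleft ↦ ?_
  · exact hasDerivWithinAt_Ioi_iff_tendsto_slope_zero_right.mpr hright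
  · exact hasDerivWithinAt_Iio_iff_tendsto_slope_zero_right_neg.mpr (by rwa [neg_zero])
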